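/- Let G be a patrolling graph, γ an optimal Defender's strategy for G, and o an observation with Prob^γ(o) > 0. Then for every target τ ∈ T, EU_A(γ[o], π_τ) ≤ α_max − Val_G, where π_τ is the Attacker's strategy that attacks τ immediately. -/

import Mathlib

namespace Patrolling

variable {V : Type} [Fintype V] [DecidableEq V] [Nonempty V]

/-- A patrolling graph `G = (V,T,E,time,d,α,β)`: a nonempty finite set of vertices `V`,
a nonempty set of targets `T ⊆ V`, edges `E`, positive traversal times `time` on edges,
attack times `d`, positive target costs `α`, and detection probabilities `β ∈ (0,1]`. -/
structure PatrollingGraph (V : Type) [Fintype V] [DecidableEq V] [Nonempty V] where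
  T : Finset V
  T_nonempty : T.Nonempty
  E : V → V → Prop
  time : V → V → ℕ
  time_pos : ∀ u v, E u v → 0 < time u v
  d : V → ℕ
  α : V → ℝ
  α_pos : ∀ τ ∈ T, 0 < α τ
  β : V → ℝ
  β_pos : ∀ τ ∈ T, 0 < β τ
  β_le_one : ∀ τ ∈ T, β τ ≤ 1

/-- `l` is a finite path in `G` (consecutive vertices joined by edges). -/
def IsPath (G : PatrollingGraph V) : List V → Prop
  | [] => True
  | [_] => True
  | u :: v :: rest => G.E u v ∧ IsPath G (v :: rest)

/-- Total traversal time along a finite sequence of vertices. -/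
def travTime (G : PatrollingGraph V) : List V → ℕ
  | u :: v :: rest => G.time u v + travTime G (v :: rest)
  | _ => 0

/-- A Defender's strategy: to every history (finite path) it assigns a probability
distribution on vertices, supported on successors of the last vertex of the history
(or arbitrary support for the empty history, giving the initial distribution). -/
structure DefStrategy (G : PatrollingGraph V) where
  f : List V → V → ℝ
  nonneg : ∀ h v, IsPath G h → 0 ≤ f h v
  sum_one : ∀ h, IsPath G h → (∑ v : V, f h v) = 1
  supp : ∀ h v, IsPath G h → 0 < f h v →
    h = [] ∨ ∃ u, h.getLast? = some u ∧ G.E u v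

/-- An Attacker's strategy: to every observation (a history together with the next
edge taken) it assigns `none` (wait) or `some τ` (attack the target `τ`), attacking
at most once along every play. -/
structure AttStrategy (G : PatrollingGraph V) where
  att : List V → V → Option V
  target : ∀ h v τ, att h v = some τ → τ ∈ G.T
  once : ∀ h v τ, att h v = some τ →
    ∀ i, 1 ≤ i → ∀ hlt : i < h.length, att (h.take i) (h.get ⟨i, hlt⟩) = none

/-- An observation `o = v₁,…,vₙ, vₙ → v_{n+1}`: a nonempty history together with
an edge emanating from its last vertex. -/
structure Obs (G : PatrollingGraph V) where
  hist : List V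
  next : V
  ne : hist ≠ []
  path : IsPath G hist
  edge : ∃ u, hist.getLast? = some u ∧ G.E u next

/-- The last vertex `vₙ` of an observation's history. -/
def lastV {G : PatrollingGraph V} (o : Obs G) : V := o.hist.getLast o.ne

/-- Probability that, having already produced the history `pre`, the Defender's
strategy `f` continues exactly along the list given as second argument. -/
def probListAux (f : List V → V → ℝ) : List V → List V → ℝ
  | _, [] => 1
  | pre, v :: rest => f pre v * probListAux f (pre ++ [v]) rest

/-- `Prob^γ(l)`: the probability that the strategy produces the vertex sequence `l`. -/
def probList (f : List V → V → ℝ) (l : List V) : ℝ := probListAux f [] l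

/-- `Prob^γ(o)` for an observation `o`. -/
def obsProb {G : PatrollingGraph V} (γ : DefStrategy G) (o : Obs G) : ℝ :=
  probList γ.f (o.hist ++ [o.next])

/-- `Eval(τ | u) = α(τ) · (1-β(τ))^(#_τ(u)-1) · β(τ)` as a function of the number
`c = #_τ(u)` of visits to `τ`. -/
def evalDet (G : PatrollingGraph V) (τ : V) (c : ℕ) : ℝ :=
  G.α τ * (1 - G.β τ) ^ (c - 1) * G.β τ

/-- `u ∈ Path(o,τ)`: a finite path starting at `v_{n+1}`, ending at `τ`, whose
traversal time from `vₙ` does not exceed `d(τ)`. -/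
def obsPathCond {G : PatrollingGraph V} (o : Obs G) (τ : V) (u : List V) : Prop :=
  u ≠ [] ∧ u.head? = some o.next ∧ u.getLast? = some τ ∧ IsPath G u ∧
    travTime G (lastV o :: u) ≤ G.d τ

/-- The protection `P^γ(τ | o) = Σ_{u ∈ Path(o,τ)} Prob^γ(u|o) · Eval(τ|u)`. -/
noncomputable def protection {G : PatrollingGraph V} (γ : DefStrategy G)
    (τ : V) (o : Obs G) : ℝ :=
  ∑' u : {u : List V // obsPathCond o τ u},
    probListAux γ.f (o.hist ++ [o.next]) u.val.tail * evalDet G τ (u.val.count τ)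

/-- Expected Attacker's utility
`EU_A(γ,π) = Σ_{τ∈T} Σ_{o∈Att(π,τ)} Prob^γ(o)·[α(τ) − P^γ(τ|o)]`. -/
noncomputable def euA {G : PatrollingGraph V} (γ : DefStrategy G) (π : AttStrategy G) : ℝ :=
  ∑ τ ∈ G.T, ∑' o : {o : Obs G // π.att o.hist o.next = some τ},
    obsProb γ o.val * (G.α τ - protection γ τ o.val)

/-- `α_max = max_{τ∈T} α(τ)`. -/
noncomputable def alphaMax (G : PatrollingGraph V) : ℝ := G.T.sup' G.T_nonempty G.α

/-- Expected Defender's utility `EU_D(γ,π) = α_max − EU_A(γ,π)`. -/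
noncomputable def euD {G : PatrollingGraph V} (γ : DefStrategy G) (π : AttStrategy G) : ℝ :=
  alphaMax G - euA γ π

/-- The value `Val_G(γ) = inf_π EU_D(γ,π)` of a Defender's strategy. -/
noncomputable def dVal {G : PatrollingGraph V} (γ : DefStrategy G) : ℝ :=
  ⨅ π : AttStrategy G, euD γ π

/-- The value of the game `Val_G = sup_γ Val_G(γ)`. -/
noncomputable def valG (G : PatrollingGraph V) : ℝ :=
  ⨆ γ : DefStrategy G, dVal γ

/-- A Defender's strategy is optimal if it achieves the value of the game. -/
def Optimal {G : PatrollingGraph V} (γ : DefStrategy G) : Prop := dVal γ = valG G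

/-- `γ'` is the shifted strategy `γ[o]`: it starts in `vₙ`, selects the edge
`vₙ → v_{n+1}` with probability one, and then
`γ[o](vₙ,v_{n+1},…,v_{n+k+1}) = γ(v₁,…,v_{n+k+1})`. -/
def IsShift {G : PatrollingGraph V} (γ : DefStrategy G) (o : Obs G)
    (γ' : DefStrategy G) : Prop :=
  γ'.f [] (lastV o) = 1 ∧
  γ'.f [lastV o] o.next = 1 ∧
  ∀ rest v, γ'.f (lastV o :: o.next :: rest) v = γ.f (o.hist ++ o.next :: rest) v

/-- The Attacker's strategy `π_τ` that attacks the target `τ` immediately: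
`π_τ(u→v) = attack_τ` for every one-step observation. -/
def attackNow (G : PatrollingGraph V) (τ : V) (hτ : τ ∈ G.T) : AttStrategy G where
  att := fun h _ => if h.length = 1 then some τ else none
  target := by
    intro h v τ' hres
    by_cases hl : h.length = 1
    · simp [hl] at hres
      subst hres
      exact hτ
    · simp [hl] at hres
  once := by
    intro h v τ' hres i hi hlt
    by_cases hl : h.length = 1
    · omega
    · simp [hl] at hres

/-- A regular Defender's strategy: memory sizes `mem`, transition probabilities `tr`
on eligible pairs `V̂ = {(v,m) : 1 ≤ m ≤ mem v}` supported on edges of `G`, and an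
initial distribution `init` on `V̂`. -/
structure RegStrategy (G : PatrollingGraph V) where
  mem : V → ℕ
  mem_pos : ∀ v, 1 ≤ mem v
  tr : V × ℕ → V × ℕ → ℝ
  init : V × ℕ → ℝ
  tr_nonneg : ∀ p q, 0 ≤ tr p q
  init_nonneg : ∀ p, 0 ≤ init p
  tr_supp : ∀ p q, 0 < tr p q →
    (1 ≤ p.2 ∧ p.2 ≤ mem p.1) ∧ (1 ≤ q.2 ∧ q.2 ≤ mem q.1) ∧ G.E p.1 q.1
  init_supp : ∀ p, 0 < init p → 1 ≤ p.2 ∧ p.2 ≤ mem p.1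
  tr_sum : ∀ p, 1 ≤ p.2 → p.2 ≤ mem p.1 → HasSum (tr p) 1
  init_sum : HasSum init 1

/-- `(v,m)` is an eligible pair for the regular strategy `R`. -/
def Elig {G : PatrollingGraph V} (R : RegStrategy G) (p : V × ℕ) : Prop :=
  1 ≤ p.2 ∧ p.2 ≤ R.mem p.1

/-- `Prob^σ(u) = ∏ σ((vᵢ,mᵢ),(v_{i+1},m_{i+1}))` along a sequence of eligible pairs. -/
def chainProb {G : PatrollingGraph V} (R : RegStrategy G) : List (V × ℕ) → ℝ
  | p :: q :: rest => R.tr p q * chainProb R (q :: rest)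
  | _ => 1

/-- Probability that the memory-augmented chain produces a given sequence of pairs,
including the initial distribution. -/
def regFullProb {G : PatrollingGraph V} (R : RegStrategy G) : List (V × ℕ) → ℝ
  | [] => 1
  | p :: rest => R.init p * chainProb R (p :: rest)

/-- `γ` is the Defender's strategy induced by the regular strategy `R`: for every
finite vertex sequence, the probability that `γ` produces it equals the marginal
probability of the memory-augmented chain. -/
def Induces {G : PatrollingGraph V} (R : RegStrategy G) (γ : DefStrategy G) : Prop :=
  ∀ l : List V, probList γ.f l =
    ∑' ms : {ms : List ℕ // ms.length = l.length}, regFullProb R (l.zip ms.val)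

/-- `R` is deterministic-update: `σ(v,m)(v',m₁) > 0` and `σ(v,m)(v',m₂) > 0`
imply `m₁ = m₂`. -/
def DetUpdate {G : PatrollingGraph V} (R : RegStrategy G) : Prop :=
  ∀ p v' m₁ m₂, 0 < R.tr p (v', m₁) → 0 < R.tr p (v', m₂) → m₁ = m₂

/-- `u ∈ Path(e,τ)`: an eligible path `(v₁,m₁),…,(v_k,m_k)` with `k ≥ 1` starting
at the endpoint of `e`, ending in a pair whose vertex is `τ`, whose traversal time
(from the vertex of the start of `e`) is at most `d(τ)`. -/
def regPathCond {G : PatrollingGraph V} (R : RegStrategy G)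
    (e : (V × ℕ) × (V × ℕ)) (τ : V) (u : List (V × ℕ)) : Prop :=
  u ≠ [] ∧ u.head? = some e.2 ∧ (u.map Prod.fst).getLast? = some τ ∧
    (∀ p ∈ u, Elig R p) ∧ IsPath G (u.map Prod.fst) ∧
    travTime G (e.1.1 :: u.map Prod.fst) ≤ G.d τ

/-- `P^σ(e,τ) = Σ_{u∈Path(e,τ)} Prob^σ(u) · Eval(τ|u)`. -/
noncomputable def regProtection {G : PatrollingGraph V} (R : RegStrategy G)
    (e : (V × ℕ) × (V × ℕ)) (τ : V) : ℝ :=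
  ∑' u : {u : List (V × ℕ) // regPathCond R e τ u},
    chainProb R u.val * evalDet G τ ((u.val.map Prod.fst).count τ)

/-- `RVal_G(σ) = α_max − max_{e∈Ê, τ∈T} {α(τ) − P^σ(e,τ)}`, where `Ê` is the set of
eligible edges (those with `σ(e) > 0`). -/
noncomputable def rVal {G : PatrollingGraph V} (R : RegStrategy G) : ℝ :=
  alphaMax G - sSup {x : ℝ | ∃ e : (V × ℕ) × (V × ℕ), ∃ τ ∈ G.T,
    0 < R.tr e.1 e.2 ∧ x = G.α τ - regProtection R e τ}

/-- `d_max = max_{τ∈T} d(τ)`. -/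
def dMax (G : PatrollingGraph V) : ℕ := G.T.sup G.d

/-- A continuation `u` after the history `h` that ends at `t` and whose traversal
time (from the last vertex of `h`) is at most `ℓ`. -/
def contCond (G : PatrollingGraph V) (h : List V) (t : V) (ℓ : ℕ) (u : List V) : Prop :=
  u ≠ [] ∧ u.getLast? = some t ∧
    ∃ w, h.getLast? = some w ∧ IsPath G (w :: u) ∧ travTime G (w :: u) ≤ ℓ

/-- The probability that `γ` successfully detects an ongoing attack at `t` within at
most `ℓ` time units after executing the history `h`. -/
noncomputable def detectProb {G : PatrollingGraph V} (γ : DefStrategy G)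
    (h : List V) (t : V) (ℓ : ℕ) : ℝ :=
  ∑' u : {u : List V // contCond G h t ℓ u},
    probListAux γ.f h u.val * ((1 - G.β t) ^ (u.val.count t - 1) * G.β t)

/-- The histories `h, h'` are `δ`-similar w.r.t. `γ`: they end with the same vertex,
both have positive probability under `γ`, and for every target `t` and every
`ℓ ∈ {1,…,d_max}` the detection probabilities after `h` and `h'` differ by at most `δ`. -/
def DeltaSimilar {G : PatrollingGraph V} (γ : DefStrategy G) (δ : ℝ)
    (h h' : List V) : Prop :=
  h ≠ [] ∧ h' ≠ [] ∧ IsPath G h ∧ IsPath G h' ∧ h.getLast? = h'.getLast? ∧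
  0 < probList γ.f h ∧ 0 < probList γ.f h' ∧
  ∀ t ∈ G.T, ∀ ℓ : ℕ, 1 ≤ ℓ → ℓ ≤ dMax G →
    |detectProb γ h t ℓ - detectProb γ h' t ℓ| ≤ δ


/-!
Write `D = α_max − Val_G`, `n = |o.hist|` and `p = Prob^γ(o) > 0`. Under `γ[o]` the one-step
observation `vₙ → v_{n+1}` has probability one, so `EU_A(γ[o], π_τ) = α(τ) − P^γ(τ|o)`.
Against `γ` itself, consider the Attacker that attacks `τ` at `o` and, on every other prefix `fv`
of length `n + 1`, plays an `εp`-best response to `γ` conditioned on `fv`. A conditioned strategy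
has value at most `Val_G`, so these branches, of total probability `1 − p`, yield at least
`D − εp` each. Optimality of `γ` bounds the total by `D`:
`p (α(τ) − P^γ(τ|o)) + (1 − p)(D − εp) ≤ D`, whence `α(τ) − P^γ(τ|o) ≤ D + ε`.
Best responses are taken with finitely many attacks, so that all the sums involved are finite.
-/

variable {G : PatrollingGraph V}

theorem isPath_iff_isChain : ∀ {l : List V}, IsPath G l ↔ l.IsChain G.E
  | [] => by simp [IsPath]
  | [_] => by simp [IsPath]
  | _ :: _ :: _ => by rw [List.isChain_cons_cons, ← isPath_iff_isChain]; rfl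

theorem isPath_append_iff {a c : List V} {x : V} (hx : a.getLast? = some x) :
    IsPath G (a ++ c) ↔ IsPath G a ∧ IsPath G (x :: c) := by
  simp only [isPath_iff_isChain, List.isChain_append, List.isChain_cons, hx, Option.mem_def,
    Option.some.injEq, forall_eq']
  tauto

theorem IsPath.of_append_left {a c : List V} (h : IsPath G (a ++ c)) : IsPath G a :=
  isPath_iff_isChain.2 (isPath_iff_isChain.1 h).left_of_append

theorem IsPath.concat {a : List V} {v : V} (ha : IsPath G a)
    (hv : a = [] ∨ ∃ u, a.getLast? = some u ∧ G.E u v) : IsPath G (a ++ [v]) := by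
  rcases hv with rfl | ⟨u, hu, huv⟩
  · trivial
  · exact (isPath_append_iff hu).2 ⟨ha, huv, trivial⟩

theorem probListAux_append {α : Type} (f : List α → α → ℝ) :
    ∀ (l₁ l₂ pre : List α),
      probListAux f pre (l₁ ++ l₂) = probListAux f pre l₁ * probListAux f (pre ++ l₁) l₂
  | [], _, _ => by simp [probListAux]
  | v :: l₁, l₂, pre => by
    simp only [List.cons_append, probListAux, probListAux_append f l₁ l₂, mul_assoc,
      List.append_assoc, List.nil_append]

theorem probListAux_congr {α : Type} {f₁ f₂ : List α → α → ℝ} {p₁ p₂ : List α}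
    (hf : ∀ rest v, f₁ (p₁ ++ rest) v = f₂ (p₂ ++ rest) v) :
    ∀ l rest, probListAux f₁ (p₁ ++ rest) l = probListAux f₂ (p₂ ++ rest) l
  | [], _ => rfl
  | v :: l, rest => by
    simp only [probListAux, hf, List.append_assoc, probListAux_congr hf l (rest ++ [v])]

theorem DefStrategy.isPath_concat_of_pos (σ : DefStrategy G) {h : List V} {v : V}
    (hh : IsPath G h) (hv : 0 < σ.f h v) : IsPath G (h ++ [v]) :=
  hh.concat (σ.supp h v hh hv)

theorem probListAux_nonneg (σ : DefStrategy G) :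
    ∀ (l : List V) {pre : List V}, IsPath G pre → 0 ≤ probListAux σ.f pre l
  | [], _, _ => zero_le_one
  | v :: l, pre, hpre => by
    rcases (σ.nonneg pre v hpre).eq_or_lt with h0 | hpos
    · simp [probListAux, ← h0]
    · exact mul_nonneg hpos.le (probListAux_nonneg σ l (σ.isPath_concat_of_pos hpre hpos))

theorem isPath_of_probListAux_ne_zero (σ : DefStrategy G) :
    ∀ (l : List V) {pre : List V}, IsPath G pre → probListAux σ.f pre l ≠ 0 →
      IsPath G (pre ++ l)
  | [], pre, hpre, _ => by simpa using hpre
  | v :: l, pre, hpre, hne => by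
    rw [probListAux, mul_ne_zero_iff] at hne
    have hpos := (σ.nonneg pre v hpre).lt_of_ne' hne.1
    simpa using isPath_of_probListAux_ne_zero σ l (σ.isPath_concat_of_pos hpre hpos) hne.2

theorem isPath_of_probList_ne_zero (σ : DefStrategy G) {l : List V}
    (hl : probList σ.f l ≠ 0) : IsPath G l := by
  simpa using isPath_of_probListAux_ne_zero σ l (pre := []) trivial hl

theorem sum_probListAux_ofFn (σ : DefStrategy G) :
    ∀ (k : ℕ) {pre : List V}, IsPath G pre →
      ∑ fv : Fin k → V, probListAux σ.f pre (List.ofFn fv) = 1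
  | 0, _, _ => by simp [probListAux]
  | k + 1, pre, hpre => by
    rw [← (Fin.consEquiv fun _ => V).sum_comp, Fintype.sum_prod_type, ← σ.sum_one pre hpre]
    refine Finset.sum_congr rfl fun v _ => ?_
    simp only [Fin.consEquiv_apply, List.ofFn_succ, Fin.cons_zero, Fin.cons_succ, probListAux,
      ← Finset.mul_sum]
    rcases (σ.nonneg pre v hpre).eq_or_lt with h0 | hpos
    · simp [← h0]
    · rw [sum_probListAux_ofFn σ k (σ.isPath_concat_of_pos hpre hpos), mul_one]

theorem sum_probList_ofFn (σ : DefStrategy G) (k : ℕ) :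
    ∑ fv : Fin k → V, probList σ.f (List.ofFn fv) = 1 :=
  sum_probListAux_ofFn σ k trivial

theorem DefStrategy.eq_zero_of_eq_one (σ : DefStrategy G) {h : List V} {v₀ v : V}
    (hh : IsPath G h) (h₀ : σ.f h v₀ = 1) (hv : v ≠ v₀) : σ.f h v = 0 := by
  have hle : σ.f h v + σ.f h v₀ ≤ 1 := by
    rw [← σ.sum_one h hh, ← Finset.sum_pair hv]
    exact Finset.sum_le_univ_sum_of_nonneg fun w => σ.nonneg h w hh
  linarith [σ.nonneg h v hh]

def IsObs (G : PatrollingGraph V) (pr : List V × V) : Prop :=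
  pr.1 ≠ [] ∧ IsPath G pr.1 ∧ ∃ u, pr.1.getLast? = some u ∧ G.E u pr.2

def Obs.ofPair (pr : List V × V) (h : IsObs G pr) : Obs G := ⟨pr.1, pr.2, h.1, h.2.1, h.2.2⟩

theorem Obs.isObs (o : Obs G) : IsObs G (o.hist, o.next) := ⟨o.ne, o.path, o.edge⟩

theorem lastV_eq_iff {o : Obs G} {x : V} : lastV o = x ↔ o.hist.getLast? = some x := by
  rw [List.getLast?_eq_some_getLast o.ne, Option.some.injEq, lastV]

theorem protection_congr {σ₁ σ₂ : DefStrategy G} {t : V} {o₁ o₂ : Obs G}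
    (hlast : lastV o₁ = lastV o₂) (hnext : o₁.next = o₂.next)
    (hprob : ∀ l, probListAux σ₁.f (o₁.hist ++ [o₁.next]) l
      = probListAux σ₂.f (o₂.hist ++ [o₂.next]) l) :
    protection σ₁ t o₁ = protection σ₂ t o₂ := by
  have hcond : obsPathCond o₁ t = obsPathCond o₂ t := by
    funext u
    rw [obsPathCond, obsPathCond, hlast, hnext]
  unfold protection
  rw [hcond]
  simp only [hprob]

theorem protection_nonneg (σ : DefStrategy G) (o : Obs G) {t : V} (ht : t ∈ G.T) :
    0 ≤ protection σ t o := by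
  have hpath : IsPath G (o.hist ++ [o.next]) := o.path.concat (Or.inr o.edge)
  have hβ : 0 ≤ 1 - G.β t := sub_nonneg.2 (G.β_le_one t ht)
  exact tsum_nonneg fun u => mul_nonneg (probListAux_nonneg σ _ hpath) <|
    mul_nonneg (mul_nonneg (G.α_pos t ht).le (pow_nonneg hβ _)) (G.β_pos t ht).le

open Classical in
/-- The summand `Prob^σ(o)·[α(t) − P^σ(t|o)]` of `EU_A`, indexed by pairs `(h, v)` instead of
observations. -/
noncomputable def payoff (σ : DefStrategy G) (t : V) (pr : List V × V) : ℝ :=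
  if h : IsObs G pr then
    probList σ.f (pr.1 ++ [pr.2]) * (G.α t - protection σ t (Obs.ofPair pr h))
  else 0

theorem payoff_obs (σ : DefStrategy G) (t : V) (o : Obs G) :
    payoff σ t (o.hist, o.next) = obsProb σ o * (G.α t - protection σ t o) := by
  rw [payoff, dif_pos o.isObs]
  rfl

theorem payoff_of_probList_eq_zero {σ : DefStrategy G} {t : V} {pr : List V × V}
    (h : probList σ.f (pr.1 ++ [pr.2]) = 0) : payoff σ t pr = 0 := by
  unfold payoff
  split_ifs <;> simp [h]

theorem isObs_of_payoff_ne_zero {σ : DefStrategy G} {t : V} {pr : List V × V}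
    (h : payoff σ t pr ≠ 0) : IsObs G pr := by
  by_contra hobs
  exact h (dif_neg hobs)

def AttStrategy.attackSet (π : AttStrategy G) : Set (List V × V) :=
  {pr | π.att pr.1 pr.2 ≠ none}

noncomputable def attackPayoff (σ : DefStrategy G) (π : AttStrategy G) (pr : List V × V) : ℝ :=
  match π.att pr.1 pr.2 with
  | some t => payoff σ t pr
  | none => 0

theorem support_attackPayoff_subset (σ : DefStrategy G) (π : AttStrategy G) :
    Function.support (attackPayoff σ π) ⊆ π.attackSet := by
  intro pr hpr hnone
  simp [attackPayoff, hnone] at hpr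

theorem summable_attackPayoff (σ : DefStrategy G) {π : AttStrategy G}
    (hπ : π.attackSet.Finite) : Summable (attackPayoff σ π) :=
  summable_of_hasFiniteSupport (hπ.subset (support_attackPayoff_subset σ π))

/-- No summability is needed here: the inner sums are those of the definition, reindexed. -/
theorem euA_eq_sum_tsum (σ : DefStrategy G) (π : AttStrategy G) :
    euA σ π = ∑ t ∈ G.T, ∑' pr : List V × V,
      if π.att pr.1 pr.2 = some t then payoff σ t pr else 0 := by
  refine Finset.sum_congr rfl fun t _ => ?_
  let g : {o : Obs G // π.att o.hist o.next = some t} → List V × V :=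
    fun o => (o.val.hist, o.val.next)
  have hg : g.Injective := by
    rintro ⟨⟨h₁, v₁, _, _, _⟩, _⟩ ⟨⟨h₂, v₂, _, _, _⟩, _⟩ he
    cases he
    rfl
  have hsupp : Function.support (fun pr : List V × V =>
      if π.att pr.1 pr.2 = some t then payoff σ t pr else 0) ⊆ Set.range g := by
    intro pr hpr
    by_cases hatt : π.att pr.1 pr.2 = some t
    · rw [Function.mem_support, if_pos hatt] at hpr
      exact ⟨⟨Obs.ofPair pr (isObs_of_payoff_ne_zero hpr), hatt⟩, rfl⟩
    · simp [hatt] at hpr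
  rw [← hg.tsum_eq hsupp]
  refine tsum_congr fun o => ?_
  simp only [g, o.2, if_true, payoff_obs]

theorem euA_eq_tsum_attackPayoff (σ : DefStrategy G) {π : AttStrategy G}
    (hπ : π.attackSet.Finite) : euA σ π = ∑' pr, attackPayoff σ π pr := by
  rw [euA_eq_sum_tsum, ← Summable.tsum_finsetSum]
  · refine tsum_congr fun pr => ?_
    unfold attackPayoff
    split
    · next t ht => simp [ht, π.target _ _ _ ht]
    · next hnone => simp [hnone]
  · intro t _
    refine summable_of_hasFiniteSupport (hπ.subset fun pr hpr hnone => ?_)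
    simp [hnone] at hpr

def noAttack (G : PatrollingGraph V) : AttStrategy G where
  att _ _ := none
  target _ _ _ h := nomatch h
  once _ _ _ h := nomatch h

theorem euA_noAttack (σ : DefStrategy G) : euA σ (noAttack G) = 0 := by
  simp [euA_eq_sum_tsum, noAttack]

theorem alpha_le_alphaMax {t : V} (ht : t ∈ G.T) : G.α t ≤ alphaMax G :=
  Finset.le_sup' G.α ht

theorem dVal_le_alphaMax (σ : DefStrategy G) : dVal σ ≤ alphaMax G := by
  by_cases hb : BddBelow (Set.range (euD σ))
  · exact (ciInf_le hb (noAttack G)).trans_eq (by simp [euD, euA_noAttack])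
  · obtain ⟨t, ht⟩ := G.T_nonempty
    rw [dVal, Real.iInf_of_not_bddBelow hb]
    exact (G.α_pos t ht).le.trans (alpha_le_alphaMax ht)

theorem dVal_le_valG (σ : DefStrategy G) : dVal σ ≤ valG G :=
  le_ciSup ⟨alphaMax G, Set.forall_mem_range.2 dVal_le_alphaMax⟩ σ

theorem exists_lt_euA (σ : DefStrategy G) {κ : ℝ} (hκ : 0 < κ) :
    ∃ π : AttStrategy G, alphaMax G - valG G - κ < euA σ π := by
  have : Nonempty (AttStrategy G) := ⟨noAttack G⟩
  obtain ⟨π, hπ⟩ :=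
    exists_lt_of_ciInf_lt ((dVal_le_valG σ).trans_lt (lt_add_of_pos_right _ hκ))
  exact ⟨π, by rw [euD] at hπ; linarith⟩

open Classical in
noncomputable def AttStrategy.restrict (π : AttStrategy G) (S : Set (List V × V)) :
    AttStrategy G where
  att h v := if (h, v) ∈ S then π.att h v else none
  target h v t ht := by
    split_ifs at ht
    exact π.target h v t ht
  once h v t ht i hi hlt := by
    split_ifs at ht
    have := π.once h v t ht i hi hlt
    simp_all

/-- When `f` is not summable, its sum is the junk value `0` and the empty partial sum will do. -/
theorem exists_finset_tsum_lt_sum_add {β : Type*} (f : β → ℝ) {ε : ℝ} (hε : 0 < ε) :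
    ∃ s : Finset β, (∀ b ∈ s, f b ≠ 0) ∧ ∑' b, f b < ∑ b ∈ s, f b + ε := by
  classical
  by_cases hf : Summable f
  · obtain ⟨s, hs⟩ := (hf.hasSum.eventually (Metric.ball_mem_nhds _ hε)).exists
    refine ⟨s.filter (f · ≠ 0), fun b hb => (Finset.mem_filter.1 hb).2, ?_⟩
    rw [Finset.sum_filter_ne_zero]
    linarith [abs_lt.1 (Real.dist_eq _ _ ▸ Metric.mem_ball'.1 hs)]
  · exact ⟨∅, by simp, by simpa [tsum_eq_zero_of_not_summable hf] using hε⟩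

theorem exists_finite_response (σ : DefStrategy G) {κ : ℝ} (hκ : 0 < κ) :
    ∃ ρ : AttStrategy G, ρ.attackSet.Finite ∧ alphaMax G - valG G - κ < euA σ ρ := by
  obtain ⟨π, hπ⟩ := exists_lt_euA σ (half_pos hκ)
  set F : V → List V × V → ℝ := fun t pr =>
    if π.att pr.1 pr.2 = some t then payoff σ t pr else 0
  have hcard : (0 : ℝ) < G.T.card := Nat.cast_pos.2 (Finset.card_pos.2 G.T_nonempty)
  set δ := κ / 2 / G.T.card
  choose s hs0 hs using fun t => exists_finset_tsum_lt_sum_add (F t) (by positivity : 0 < δ)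
  have hatt : ∀ {t pr}, pr ∈ s t → π.att pr.1 pr.2 = some t := fun {t pr} hpr => by
    by_contra h
    exact hs0 t pr hpr (if_neg h)
  set S : Set (List V × V) := ⋃ t ∈ G.T, (s t : Set (List V × V))
  have hrestrict : ∀ t ∈ G.T, ∑' pr, (if (π.restrict S).att pr.1 pr.2 = some t
      then payoff σ t pr else 0) = ∑ pr ∈ s t, F t pr := by
    intro t ht
    rw [tsum_eq_sum (s := s t)]
    · refine Finset.sum_congr rfl fun pr hpr => ?_
      have hS : pr ∈ S := Set.mem_biUnion ht (Finset.mem_coe.2 hpr)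
      simp [AttStrategy.restrict, F, hS]
    · intro pr hpr
      by_cases hS : pr ∈ S
      · obtain ⟨t', -, hpr'⟩ := Set.mem_iUnion₂.1 hS
        have ht' : t' ≠ t := fun h => hpr (h ▸ hpr')
        simp [AttStrategy.restrict, hS, hatt hpr', ht']
      · simp [AttStrategy.restrict, hS]
  refine ⟨π.restrict S, ?_, ?_⟩
  · refine (G.T.finite_toSet.biUnion fun t _ => (s t).finite_toSet).subset fun pr hpr => ?_
    by_contra hS
    exact hpr (if_neg hS)
  · have hlt : euA σ π < euA σ (π.restrict S) + G.T.card * δ := by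
      rw [euA_eq_sum_tsum σ (π.restrict S), Finset.sum_congr rfl hrestrict, euA_eq_sum_tsum,
        ← nsmul_eq_mul, ← Finset.sum_const, ← Finset.sum_add_distrib]
      exact Finset.sum_lt_sum_of_nonempty G.T_nonempty fun t _ => hs t
    have hδ : G.T.card * δ = κ / 2 := mul_div_cancel₀ _ hcard.ne'
    linarith

open Classical in
/-- `γ` conditioned on having produced the path `l`, restarted at its last vertex `x`. The cases
other than a history starting at the last vertex of `l` only serve to make it a strategy. -/
noncomputable def condStrat (γ : DefStrategy G) (l : List V) (x : V) : DefStrategy G where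
  f h v := match h with
    | [] => if v = x then 1 else 0
    | y :: rest =>
      if IsPath G l ∧ l.getLast? = some y then γ.f (l ++ rest) v else γ.f (y :: rest) v
  nonneg h v hh := by
    rcases h with _ | ⟨y, rest⟩
    · dsimp only
      split_ifs <;> norm_num
    · dsimp only
      split_ifs with hl
      · exact γ.nonneg _ v ((isPath_append_iff hl.2).2 ⟨hl.1, hh⟩)
      · exact γ.nonneg _ v hh
  sum_one h hh := by
    rcases h with _ | ⟨y, rest⟩
    · simp
    · dsimp only
      split_ifs with hl
      · exact γ.sum_one _ ((isPath_append_iff hl.2).2 ⟨hl.1, hh⟩)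
      · exact γ.sum_one _ hh
  supp h v hh hv := by
    rcases h with _ | ⟨y, rest⟩
    · exact Or.inl rfl
    · right
      dsimp only at hv
      split_ifs at hv with hl
      · have hlr := (isPath_append_iff hl.2).2 ⟨hl.1, hh⟩
        rcases γ.supp _ v hlr hv with hnil | ⟨u, hu, huv⟩
        · simp_all
        · refine ⟨u, ?_, huv⟩
          rw [← hu, List.getLast?_append, List.getLast?_cons, hl.2]
          cases rest.getLast? <;> rfl
      · exact (γ.supp _ v hh hv).resolve_left (List.cons_ne_nil y rest)

section Conditioning

variable {γ : DefStrategy G} {l : List V} {x : V}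

theorem probListAux_condStrat (hl : IsPath G l) (hx : l.getLast? = some x) (rest ll : List V) :
    probListAux (condStrat γ l x).f (x :: rest) ll = probListAux γ.f (l ++ rest) ll :=
  probListAux_congr (p₁ := [x]) (fun _ _ => if_pos ⟨hl, hx⟩) ll rest

theorem probList_condStrat (hl : IsPath G l) (hx : l.getLast? = some x) (rest : List V) :
    probList (condStrat γ l x).f (x :: rest) = probListAux γ.f l rest := by
  simpa [probList, probListAux, condStrat] using probListAux_condStrat hl hx [] rest

theorem payoff_condStrat_of_ne {y : V} (hy : y ≠ x) (t : V) (rest : List V) (v : V) :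
    payoff (condStrat γ l x) t (y :: rest, v) = 0 :=
  payoff_of_probList_eq_zero (by simp [probList, probListAux, condStrat, hy])

theorem payoff_append (hx : l.getLast? = some x) (t : V) (rest : List V) (v : V) :
    payoff γ t (l ++ rest, v) = probList γ.f l * payoff (condStrat γ l x) t (x :: rest, v) := by
  by_cases hl : IsPath G l
  · have hlast : (l ++ rest).getLast? = (x :: rest).getLast? := by
      rw [List.getLast?_append, List.getLast?_cons, hx]
      cases rest.getLast? <;> rfl
    have hne : l ≠ [] := by
      rintro rfl
      simp at hx
    have hobs : IsObs G (l ++ rest, v) ↔ IsObs G (x :: rest, v) := by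
      simp only [IsObs, hlast, isPath_append_iff hx, hl, true_and, ne_eq, List.cons_ne_nil,
        not_false_eq_true, List.append_eq_nil_iff, hne, false_and]
    by_cases h : IsObs G (x :: rest, v)
    · rw [payoff, dif_pos (hobs.2 h), payoff, dif_pos h]
      have hprot : protection γ t (Obs.ofPair _ (hobs.2 h))
          = protection (condStrat γ l x) t (Obs.ofPair _ h) := by
        refine protection_congr ?_ rfl fun ll => ?_
        · rw [lastV_eq_iff]
          exact hlast.trans (List.getLast?_eq_some_getLast (List.cons_ne_nil x rest))
        · show probListAux γ.f (l ++ rest ++ [v]) ll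
            = probListAux (condStrat γ l x).f (x :: rest ++ [v]) ll
          rw [List.append_assoc, List.cons_append, probListAux_condStrat hl hx]
      rw [hprot, List.cons_append, probList_condStrat hl hx, List.append_assoc, probList,
        probListAux_append, ← probList, List.nil_append, mul_assoc]
    · rw [payoff, dif_neg (mt hobs.1 h), payoff, dif_neg h, mul_zero]
  · have hzero : probList γ.f l = 0 := by
      by_contra h
      exact hl (isPath_of_probList_ne_zero γ h)
    rw [hzero, zero_mul, payoff, dif_neg fun h => hl h.2.1.of_append_left]

end Conditioning

theorem getLast?_ofFn {α : Type*} {k : ℕ} (fv : Fin (k + 1) → α) :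
    (List.ofFn fv).getLast? = some (fv (Fin.last k)) := by
  rw [List.ofFn_succ', List.concat_eq_append, List.getLast?_concat]

theorem drop_ofFn_append {α : Type*} {k : ℕ} (fv : Fin (k + 1) → α) (t : List α) :
    (List.ofFn fv ++ t).drop k = fv (Fin.last k) :: t := by
  rw [List.ofFn_succ', List.concat_eq_append, List.append_assoc, List.drop_left' (by simp)]
  rfl

theorem exists_ofFn_eq {α : Type*} {k : ℕ} {l : List α} (hl : l.length = k) :
    ∃ fv : Fin k → α, List.ofFn fv = l := by
  subst hl
  exact ⟨fun i => l[i.val], List.ofFn_getElem⟩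

theorem exists_ofFn_append {α : Type*} {k : ℕ} {h : List α} (hk : k < h.length) :
    ∃ (fv : Fin (k + 1) → α) (t : List α), h = List.ofFn fv ++ t := by
  obtain ⟨fv, hfv⟩ := exists_ofFn_eq (k := k + 1) (l := h.take (k + 1)) (by simp; omega)
  exact ⟨fv, h.drop (k + 1), by rw [hfv, List.take_append_drop]⟩

/-- On a history `h` longer than `k`, play `ρ fv`, where `fv` lists the first `k + 1` vertices
of `h`, on the suffix of `h` starting at the last vertex of `fv` (index `k`). -/
def AttStrategy.graft (k : ℕ) (ρ : (Fin (k + 1) → V) → AttStrategy G) : AttStrategy G where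
  att h v :=
    if hk : k < h.length then (ρ fun i => h[i.val]'(Nat.lt_of_lt_of_le i.isLt hk)).att (h.drop k) v
    else none
  target h v t ht := by
    split_ifs at ht
    exact (ρ _).target _ _ _ ht
  once h v t ht i hi hlt := by
    split_ifs at ht with hk
    by_cases hik : k < i
    · rw [dif_pos (by rw [List.length_take]; omega)]
      simp only [List.getElem_take, List.drop_take]
      convert (ρ _).once _ v t ht (i - k) (by omega) (by simp; omega) using 2
      simp only [List.get_eq_getElem, List.getElem_drop]
      congr 1
      omega
    · rw [dif_neg (by rw [List.length_take]; omega)]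

section Graft

variable {k : ℕ} {ρ : (Fin (k + 1) → V) → AttStrategy G}

theorem AttStrategy.graft_att_of_length_le {h : List V} (hh : h.length ≤ k) (v : V) :
    (AttStrategy.graft k ρ).att h v = none :=
  dif_neg (Nat.not_lt.2 hh)

theorem AttStrategy.graft_att_ofFn_append (fv : Fin (k + 1) → V) (t : List V) (v : V) :
    (AttStrategy.graft k ρ).att (List.ofFn fv ++ t) v = (ρ fv).att (fv (Fin.last k) :: t) v := by
  have hk : k < (List.ofFn fv ++ t).length := by simp
  have hfv : (fun i : Fin (k + 1) => (List.ofFn fv ++ t)[i.val]'(by simp; omega)) = fv := by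
    funext i
    rw [List.getElem_append_left (by rw [List.length_ofFn]; exact i.isLt), List.getElem_ofFn]
  simp only [AttStrategy.graft, dif_pos hk, hfv, drop_ofFn_append]

theorem AttStrategy.attackSet_graft_finite (hρ : ∀ fv, (ρ fv).attackSet.Finite) :
    (AttStrategy.graft k ρ).attackSet.Finite := by
  refine (Set.finite_iUnion fun fv => (hρ fv).image
    fun pr => (List.ofFn fv ++ pr.1.tail, pr.2)).subset ?_
  rintro ⟨h, v⟩ hatt
  have hk : k < h.length := by
    by_contra hk
    exact hatt (AttStrategy.graft_att_of_length_le (Nat.not_lt.1 hk) v)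
  obtain ⟨fv, t, rfl⟩ := exists_ofFn_append hk
  refine Set.mem_iUnion.2 ⟨fv, (fv (Fin.last k) :: t, v), ?_, rfl⟩
  change (AttStrategy.graft k ρ).att (List.ofFn fv ++ t) v ≠ none at hatt
  rwa [AttStrategy.graft_att_ofFn_append] at hatt

theorem attackPayoff_eq_zero {σ : DefStrategy G} {π : AttStrategy G} {pr : List V × V}
    (h : ∀ t, payoff σ t pr = 0) : attackPayoff σ π pr = 0 := by
  unfold attackPayoff
  split <;> simp [h]

theorem attackPayoff_graft (γ : DefStrategy G) (fv : Fin (k + 1) → V) (t : List V) (v : V) :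
    attackPayoff γ (AttStrategy.graft k ρ) (List.ofFn fv ++ t, v)
      = probList γ.f (List.ofFn fv)
        * attackPayoff (condStrat γ (List.ofFn fv) (fv (Fin.last k))) (ρ fv)
          (fv (Fin.last k) :: t, v) := by
  dsimp only [attackPayoff]
  rw [AttStrategy.graft_att_ofFn_append]
  cases (ρ fv).att (fv (Fin.last k) :: t) v with
  | none => rw [mul_zero]
  | some s => exact payoff_append (getLast?_ofFn fv) s t v

theorem tsum_attackPayoff_graft (γ : DefStrategy G) (hρ : ∀ fv, (ρ fv).attackSet.Finite) :
    ∑' pr, attackPayoff γ (AttStrategy.graft k ρ) pr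
      = ∑ fv, probList γ.f (List.ofFn fv)
        * euA (condStrat γ (List.ofFn fv) (fv (Fin.last k))) (ρ fv) := by
  let e : (Fin (k + 1) → V) × (List V × V) → List V × V :=
    fun c => (List.ofFn c.1 ++ c.2.1, c.2.2)
  have he : e.Injective := by
    rintro ⟨fv, t, v⟩ ⟨fv', t', v'⟩ h
    simp only [e, Prod.mk.injEq] at h
    obtain ⟨hfv, rfl⟩ := List.append_inj h.1 (by simp)
    rw [List.ofFn_inj.1 hfv, h.2]
  have hsupp : Function.support (attackPayoff γ (AttStrategy.graft k ρ)) ⊆ Set.range e := by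
    rintro ⟨h, v⟩ hpr
    have hk : k < h.length := by
      by_contra hk
      exact support_attackPayoff_subset _ _ hpr
        (AttStrategy.graft_att_of_length_le (Nat.not_lt.1 hk) v)
    obtain ⟨fv, t, rfl⟩ := exists_ofFn_append hk
    exact ⟨(fv, t, v), rfl⟩
  have hsum : Summable fun c => attackPayoff γ (AttStrategy.graft k ρ) (e c) :=
    (summable_attackPayoff γ (AttStrategy.attackSet_graft_finite hρ)).comp_injective he
  rw [← he.tsum_eq hsupp, hsum.tsum_prod, tsum_fintype]
  refine Finset.sum_congr rfl fun fv _ => ?_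
  simp only [e, attackPayoff_graft, tsum_mul_left, euA_eq_tsum_attackPayoff _ (hρ fv)]
  congr 1
  refine Function.Injective.tsum_eq (g := fun c : List V × V => (fv (Fin.last k) :: c.1, c.2))
    (fun c c' h => by simpa [Prod.ext_iff] using h) ?_
  rintro ⟨_ | ⟨y, t⟩, v⟩ hpr
  · refine absurd (attackPayoff_eq_zero fun t => ?_) hpr
    exact dif_neg fun hobs => hobs.1 rfl
  · by_cases hy : y = fv (Fin.last k)
    · exact ⟨(t, v), by rw [hy]⟩
    · exact absurd (attackPayoff_eq_zero fun _ => payoff_condStrat_of_ne hy _ t v) hpr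

end Graft

def avoidObs (o : Obs G) (ρ : (Fin (o.hist.length + 1) → V) → AttStrategy G)
    (fv : Fin (o.hist.length + 1) → V) : AttStrategy G :=
  if List.ofFn fv = o.hist ++ [o.next] then noAttack G else ρ fv

def deviation (o : Obs G) {τ : V} (hτ : τ ∈ G.T)
    (ρ : (Fin (o.hist.length + 1) → V) → AttStrategy G) : AttStrategy G where
  att h v := if h = o.hist ∧ v = o.next then some τ
    else (AttStrategy.graft o.hist.length (avoidObs o ρ)).att h v
  target h v t ht := by
    split_ifs at ht
    · exact Option.some.inj ht ▸ hτ
    · exact AttStrategy.target _ h v t ht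
  once h v t ht i hi hlt := by
    have hlen : (h.take i).length = i := List.length_take_of_le hlt.le
    split_ifs at ht with hA
    · rw [if_neg fun hB => by rw [hA.1, ← hB.1, hlen] at hlt; omega]
      exact AttStrategy.graft_att_of_length_le (by rw [hlen, ← hA.1]; omega) _
    by_cases hB : h.take i = o.hist ∧ h[i] = o.next
    · exfalso
      have hi : i = o.hist.length := by rw [← hB.1, hlen]
      have htake : h.take (o.hist.length + 1) = o.hist ++ [o.next] := by
        rw [← hi, List.take_add_one, List.getElem?_eq_getElem hlt, hB.1, hB.2]
        rfl
      obtain ⟨fv, t', rfl⟩ := exists_ofFn_append (k := o.hist.length) (h := h) (by omega)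
      rw [List.take_left' (List.length_ofFn)] at htake
      rw [AttStrategy.graft_att_ofFn_append, avoidObs, if_pos htake] at ht
      exact nomatch ht
    · exact (if_neg hB).trans (AttStrategy.once _ h v t ht i hi hlt)

section Deviation

variable {o : Obs G} {ρ : (Fin (o.hist.length + 1) → V) → AttStrategy G}

theorem attackSet_avoidObs_finite (hρ : ∀ fv, (ρ fv).attackSet.Finite)
    (fv : Fin (o.hist.length + 1) → V) : (avoidObs o ρ fv).attackSet.Finite := by
  unfold avoidObs
  split_ifs
  · exact Set.finite_empty.subset fun _ h => h rfl
  · exact hρ fv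

theorem euA_deviation (γ : DefStrategy G) {τ : V} (hτ : τ ∈ G.T)
    (hρ : ∀ fv, (ρ fv).attackSet.Finite) :
    euA γ (deviation o hτ ρ) = obsProb γ o * (G.α τ - protection γ τ o)
      + ∑ fv, probList γ.f (List.ofFn fv)
        * euA (condStrat γ (List.ofFn fv) (fv (Fin.last _))) (avoidObs o ρ fv) := by
  classical
  set Γ := AttStrategy.graft o.hist.length (avoidObs o ρ)
  have hΓ : Γ.attackSet.Finite :=
    AttStrategy.attackSet_graft_finite (attackSet_avoidObs_finite hρ)
  have hfin : (deviation o hτ ρ).attackSet.Finite := by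
    refine (hΓ.insert (o.hist, o.next)).subset fun pr hpr => ?_
    by_cases hA : pr = (o.hist, o.next)
    · exact Or.inl hA
    · refine Or.inr fun hnone => hpr ?_
      simp only [deviation, Prod.ext_iff] at hA ⊢
      rw [if_neg hA]
      exact hnone
  have hsplit : ∀ pr, attackPayoff γ (deviation o hτ ρ) pr
      = (if pr = (o.hist, o.next) then payoff γ τ (o.hist, o.next) else 0)
        + attackPayoff γ Γ pr := by
    rintro ⟨h, v⟩
    by_cases hA : h = o.hist ∧ v = o.next
    · obtain ⟨rfl, rfl⟩ := hA
      simp [attackPayoff, deviation, Γ, AttStrategy.graft_att_of_length_le le_rfl]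
    · have hA' : (h, v) ≠ (o.hist, o.next) := by simpa [Prod.ext_iff] using hA
      simp only [attackPayoff, deviation, if_neg hA, if_neg hA', zero_add, Γ]
  rw [euA_eq_tsum_attackPayoff γ hfin, tsum_congr hsplit,
    Summable.tsum_add (hasSum_ite_eq _ _).summable (summable_attackPayoff γ hΓ), tsum_ite_eq,
    payoff_obs, tsum_attackPayoff_graft γ (attackSet_avoidObs_finite hρ)]

end Deviation

theorem euA_attackNow_of_isShift {γ γ' : DefStrategy G} {o : Obs G}
    (hshift : IsShift γ o γ') {τ : V} (hτ : τ ∈ G.T) :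
    euA γ' (attackNow G τ hτ) = G.α τ - protection γ τ o := by
  obtain ⟨hstart, hnext, hrest⟩ := hshift
  have hfin : (attackNow G τ hτ).attackSet.Finite := by
    refine (Set.finite_range fun q : V × V => ([q.1], q.2)).subset ?_
    rintro ⟨h, v⟩ hatt
    have hl : h.length = 1 := by
      by_contra hl
      exact hatt (if_neg hl)
    obtain ⟨x, rfl⟩ := List.length_eq_one_iff.1 hl
    exact ⟨(x, v), rfl⟩
  have hobs : IsObs G ([lastV o], o.next) := by
    obtain ⟨u, hu, huv⟩ := o.edge
    exact ⟨List.cons_ne_nil _ _, trivial, u, (lastV_eq_iff.2 hu).symm ▸ rfl, huv⟩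
  rw [euA_eq_tsum_attackPayoff γ' hfin, tsum_eq_single ([lastV o], o.next)]
  · have hprot : protection γ' τ (Obs.ofPair _ hobs) = protection γ τ o := by
      refine protection_congr (lastV_eq_iff.2 rfl) rfl fun l => ?_
      show probListAux γ'.f ([lastV o] ++ [o.next]) l = _
      simpa using probListAux_congr (p₁ := [lastV o, o.next]) (p₂ := o.hist ++ [o.next])
        (fun rest v => by simpa using hrest rest v) l []
    simp [attackPayoff, attackNow, payoff, hobs, hprot, probList, probListAux, hstart, hnext]
  · rintro ⟨h, v⟩ hne
    by_cases hl : h.length = 1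
    · obtain ⟨x, rfl⟩ := List.length_eq_one_iff.1 hl
      refine attackPayoff_eq_zero fun t => payoff_of_probList_eq_zero ?_
      simp only [probList, probListAux, List.nil_append, List.singleton_append, mul_one]
      by_cases hx : x = lastV o
      · have hv : v ≠ o.next := fun hv => hne (by rw [hx, hv])
        rw [hx, γ'.eq_zero_of_eq_one (h := [lastV o]) trivial hnext hv, mul_zero]
      · rw [γ'.eq_zero_of_eq_one (h := []) trivial hstart hx, zero_mul]
    · simp [attackPayoff, attackNow, hl]

theorem sub_protection_le_of_forall_euA_le {γ : DefStrategy G} {o : Obs G} {τ : V}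
    (hτ : τ ∈ G.T) (hγ : ∀ π, euA γ π ≤ alphaMax G - valG G) (ho : 0 < obsProb γ o) :
    G.α τ - protection γ τ o ≤ alphaMax G - valG G := by
  set D := alphaMax G - valG G
  set p := obsProb γ o
  refine le_of_forall_pos_le_add fun ε hε => ?_
  choose ρ hρfin hρ using fun fv : Fin (o.hist.length + 1) → V =>
    exists_finite_response (condStrat γ (List.ofFn fv) (fv (Fin.last _))) (mul_pos hε ho)
  obtain ⟨fv₀, hfv₀⟩ :=
    exists_ofFn_eq (k := o.hist.length + 1) (l := o.hist ++ [o.next]) (by simp)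
  have hbranch : ∀ fv, probList γ.f (List.ofFn fv) * (D - ε * p)
      - (if fv = fv₀ then p * (D - ε * p) else 0)
      ≤ probList γ.f (List.ofFn fv)
        * euA (condStrat γ (List.ofFn fv) (fv (Fin.last _))) (avoidObs o ρ fv) := by
    intro fv
    by_cases hfv : fv = fv₀
    · rw [if_pos hfv, avoidObs, if_pos (hfv ▸ hfv₀), euA_noAttack, hfv, hfv₀]
      simp [p, obsProb]
    · rw [if_neg hfv, sub_zero, avoidObs,
        if_neg fun h => hfv (List.ofFn_inj.1 (h.trans hfv₀.symm))]
      exact mul_le_mul_of_nonneg_left (hρ fv).le (probListAux_nonneg γ _ (pre := []) trivial)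
  have hbranches := Finset.sum_le_sum fun fv (_ : fv ∈ Finset.univ) => hbranch fv
  rw [Finset.sum_sub_distrib, ← Finset.sum_mul, sum_probList_ofFn, Finset.sum_ite_eq',
    if_pos (Finset.mem_univ _)] at hbranches
  have hdev := hγ (deviation o hτ ρ)
  rw [euA_deviation γ hτ hρfin] at hdev
  change p * _ + _ ≤ D at hdev
  have hmul : p * (G.α τ - protection γ τ o) ≤ p * (D + ε) := by
    linarith [mul_nonneg (mul_nonneg hε.le ho.le) ho.le]
  exact le_of_mul_le_mul_left hmul ho

/-- Let `G` be a patrolling graph, `γ` an optimal Defender's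
strategy for `G`, and `o` an observation with `Prob^γ(o) > 0`. Then for every target
`τ ∈ T`, `EU_A(γ[o], π_τ) ≤ α_max − Val_G`, where `π_τ` is the Attacker's strategy
that attacks `τ` immediately. -/
theorem euA_shift_attackNow_le
    {V : Type} [Fintype V] [DecidableEq V] [Nonempty V] (G : PatrollingGraph V)
    (γ : DefStrategy G) (hopt : Optimal γ) (o : Obs G) (ho : 0 < obsProb γ o)
    (τ : V) (hτ : τ ∈ G.T) (γ' : DefStrategy G) (hshift : IsShift γ o γ') :
    euA γ' (attackNow G τ hτ) ≤ alphaMax G - valG G := by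
  unfold Optimal at hopt
  rw [euA_attackNow_of_isShift hshift hτ]
  by_cases hbdd : BddBelow (Set.range (euD γ))
  · refine sub_protection_le_of_forall_euA_le hτ (fun π => ?_) ho
    have hπ : valG G ≤ euD γ π := hopt ▸ ciInf_le hbdd π
    rw [euD] at hπ
    linarith
  · -- an infimum of reals unbounded below is the junk value `0`
    have hval : valG G = 0 := by rw [← hopt, dVal, Real.iInf_of_not_bddBelow hbdd]
    linarith [alpha_le_alphaMax hτ, protection_nonneg γ o hτ]

end Patrolling
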